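/- Let G be a finite group and A a finite set of size q ≥ 2. Let x, y ∈ A^G be configurations lying in different G-orbits (xG ≠ yG). Then there exists a non-bijective G-equivariant transformation τ : A^G → A^G with τ(x) = y if and only if G_x ≤ G_y (the stabilizer of x is contained in the stabilizer of y). -/

import Mathlib

variable {G A : Type*}

/-- The right shift action of `G` on configurations `A^G`: `(x · g) h = x (h * g⁻¹)`. -/
def shift [Group G] (x : G → A) (g : G) : G → A := fun h => x (h * g⁻¹)

/-- A transformation of the configuration space is `G`-equivariant if it commutes
with the shift action. -/
def equivariant [Group G] (τ : (G → A) → (G → A)) : Prop :=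
  ∀ (x : G → A) (g : G), τ (shift x g) = shift (τ x) g

/-- The `G`-orbit of a configuration. -/
def orbit [Group G] (x : G → A) : Set (G → A) := Set.range (shift x)

/-- The stabilizer of a configuration, as a subgroup of `G`. -/
def stab [Group G] (x : G → A) : Subgroup G where
  carrier := {g : G | shift x g = x}
  one_mem' := by
    show shift x 1 = x
    funext h
    simp [shift]
  mul_mem' := by
    intro a b ha hb
    have ha' : shift x a = x := ha
    have hb' : shift x b = x := hb
    show shift x (a * b) = x
    funext h
    show x (h * (a * b)⁻¹) = x h
    have key : h * (a * b)⁻¹ = h * b⁻¹ * a⁻¹ := by group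
    rw [key]
    have h1 := congrFun ha' (h * b⁻¹)
    have h2 := congrFun hb' h
    simp only [shift] at h1 h2
    rw [h1, h2]
  inv_mem' := by
    intro a ha
    have ha' : shift x a = x := ha
    show shift x a⁻¹ = x
    funext h
    show x (h * a⁻¹⁻¹) = x h
    rw [inv_inv]
    have h1 := congrFun ha' (h * a)
    simp only [shift] at h1
    rw [mul_inv_cancel_right] at h1
    exact h1.symm

/-- Two subgroups `H`, `K` of `G` are conjugate, namely `K = g⁻¹ * H * g` for some `g ∈ G`. -/
def conjSub [Group G] (H K : Subgroup G) : Prop :=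
  ∃ g : G, ∀ a : G, a ∈ K ↔ g * a * g⁻¹ ∈ H

/-!
The forward direction holds for every equivariant `τ`: if `x · g = x` then
`τ x · g = τ (x · g) = τ x`. Conversely, when `G_x ≤ G_y` the rule `x · g ↦ y · g` is a
well-defined equivariant map on the orbit `xG`; extending it by the identity off `xG` gives an
equivariant `τ` with `τ x = y = τ y`, which is not injective since `y ∉ xG`.
-/

section

variable [Group G]

lemma shift_shift (x : G → A) (a b : G) : shift (shift x a) b = shift x (a * b) := by
  funext h
  simp [shift, mul_assoc]

lemma shift_one (x : G → A) : shift x 1 = x := by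
  funext h
  simp [shift]

lemma shift_shift_inv (x : G → A) (g : G) : shift (shift x g) g⁻¹ = x := by
  rw [shift_shift, mul_inv_cancel, shift_one]

lemma shift_eq_shift_iff {x : G → A} {a b : G} : shift x a = shift x b ↔ a * b⁻¹ ∈ stab x := by
  change _ ↔ shift x (a * b⁻¹) = x
  constructor
  · intro hab
    rw [← shift_shift, hab, shift_shift_inv]
  · intro hx
    calc shift x a = shift (shift x (a * b⁻¹)) b := by rw [shift_shift, inv_mul_cancel_right]
      _ = shift x b := by rw [hx]

lemma stab_le_stab_apply {τ : (G → A) → (G → A)} (hτ : equivariant τ) (x : G → A) :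
    stab x ≤ stab (τ x) := by
  intro g (hg : shift x g = x)
  change shift (τ x) g = τ x
  rw [← hτ, hg]

lemma shift_mem_orbit (x : G → A) (g : G) : shift x g ∈ orbit x := ⟨g, rfl⟩

lemma shift_mem_orbit_iff {x z : G → A} {g : G} : shift z g ∈ orbit x ↔ z ∈ orbit x := by
  constructor
  · rintro ⟨a, ha⟩
    refine ⟨a * g⁻¹, ?_⟩
    rw [← shift_shift, ha, shift_shift_inv]
  · rintro ⟨a, rfl⟩
    rw [shift_shift]
    exact shift_mem_orbit x _

lemma orbit_shift (x : G → A) (g : G) : orbit (shift x g) = orbit x := by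
  ext z
  constructor
  · rintro ⟨b, rfl⟩
    exact ⟨g * b, (shift_shift x g b).symm⟩
  · rintro ⟨b, rfl⟩
    exact ⟨g⁻¹ * b, by rw [shift_shift, mul_inv_cancel_left]⟩

lemma notMem_orbit_of_orbit_ne {x y : G → A} (hxy : orbit x ≠ orbit y) : y ∉ orbit x := by
  rintro ⟨g, rfl⟩
  exact hxy (orbit_shift x g).symm

noncomputable def orbitMap (x y : G → A) (z : G → A) : G → A :=
  open Classical in
  if hz : z ∈ orbit x then shift y hz.choose else z

section orbitMap

variable {x y : G → A}

lemma orbitMap_shift (hst : stab x ≤ stab y) (g : G) : orbitMap x y (shift x g) = shift y g := by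
  have hz := shift_mem_orbit x g
  rw [orbitMap, dif_pos hz]
  exact shift_eq_shift_iff.mpr (hst (shift_eq_shift_iff.mp hz.choose_spec))

lemma orbitMap_self (hst : stab x ≤ stab y) : orbitMap x y x = y := by
  simpa only [shift_one] using orbitMap_shift hst 1

lemma orbitMap_of_notMem {z : G → A} (hz : z ∉ orbit x) : orbitMap x y z = z := by
  rw [orbitMap, dif_neg hz]

lemma equivariant_orbitMap (hst : stab x ≤ stab y) : equivariant (orbitMap x y) := by
  intro z g
  by_cases hz : z ∈ orbit x
  · obtain ⟨a, rfl⟩ := hz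
    rw [shift_shift, orbitMap_shift hst, orbitMap_shift hst, shift_shift]
  · rw [orbitMap_of_notMem hz, orbitMap_of_notMem (mt shift_mem_orbit_iff.mp hz)]

lemma not_injective_orbitMap (hst : stab x ≤ stab y) (hxy : orbit x ≠ orbit y) :
    ¬ Function.Injective (orbitMap x y) := by
  have hy := notMem_orbit_of_orbit_ne hxy
  have hx : x ≠ y := fun h => hy (h ▸ ⟨1, shift_one x⟩)
  refine fun hinj => hx (hinj ?_)
  rw [orbitMap_of_notMem hy, orbitMap_self hst]

end orbitMap

end

theorem exists_noninvertible_sending_iff_stab_le_general [Group G]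
    (x y : G → A) (hxy : orbit x ≠ orbit y) :
    (∃ τ : (G → A) → (G → A), equivariant τ ∧ ¬ Function.Bijective τ ∧ τ x = y) ↔
      stab x ≤ stab y := by
  constructor
  · rintro ⟨τ, hτ, -, rfl⟩
    exact stab_le_stab_apply hτ x
  · intro hst
    refine ⟨orbitMap x y, equivariant_orbitMap hst,
      fun hbij => not_injective_orbitMap hst hxy hbij.injective, orbitMap_self hst⟩

/-- for configurations `x`, `y` in different `G`-orbits, there is a
non-bijective `G`-equivariant transformation sending `x` to `y` iff
`stab x ≤ stab y`. -/
theorem exists_noninvertible_sending_iff_stab_le [Group G] [Fintype G] [Fintype A]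
    (hq : 2 ≤ Fintype.card A)
    (x y : G → A) (hxy : orbit x ≠ orbit y) :
    (∃ τ : (G → A) → (G → A), equivariant τ ∧ ¬ Function.Bijective τ ∧ τ x = y) ↔
      stab x ≤ stab y :=
  exists_noninvertible_sending_iff_stab_le_general x y hxy
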